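/- arXiv:math/0401339 — 2 statements merged into one kernel-verified Lean document; each statement's English description precedes it below -/
import Mathlib

section
/- For an n × n alternating sign matrix A with s(A) entries equal to −1, the inversion numbers satisfy i(A) + i(A̅) = C(n,2) + s(A), where A̅ is the vertical reflection of A. -/
open Finset

/-- The nonzero entries alternate in sign, beginning and ending with `1`. -/
def AltList (l : List ℤ) : Prop :=
  l.length % 2 = 1 ∧ ∀ (m : ℕ) (h : m < l.length), l.get ⟨m, h⟩ = if m % 2 = 0 then 1 else -1

/-- Alternating sign matrix: entries in `{-1,0,1}` (forced), and in each row and column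
the nonzero entries alternate in sign, beginning and ending with `1`. -/
def IsASM {n : ℕ} (A : Matrix (Fin n) (Fin n) ℤ) : Prop :=
  (∀ i, AltList ((List.ofFn (fun j => A i j)).filter (fun x => x ≠ 0))) ∧
  (∀ j, AltList ((List.ofFn (fun i => A i j)).filter (fun x => x ≠ 0)))

/-- Vertical reflection: `(reflect A) i j = A i (n+1-j)` (0-indexed as `Fin.rev`). -/
def reflect {n : ℕ} (A : Matrix (Fin n) (Fin n) ℤ) : Matrix (Fin n) (Fin n) ℤ :=
  fun i j => A i j.rev

/-- Number of `-1` entries of `A`. -/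
def sMinus {n : ℕ} (A : Matrix (Fin n) (Fin n) ℤ) : ℕ :=
  ((univ ×ˢ univ).filter (fun p : Fin n × Fin n => A p.1 p.2 = -1)).card

/-- Inversion number `i(A) = ∑_{i<k, ℓ<j} a_{ij} a_{kℓ}`. -/
def invNum {n : ℕ} (A : Matrix (Fin n) (Fin n) ℤ) : ℤ :=
  ∑ i : Fin n, ∑ j : Fin n, ∑ k : Fin n, ∑ l : Fin n,
    if i < k ∧ l < j then A i j * A k l else 0

/-!
Since `i(A)` sums `a_{ij} a_{kℓ}` over `i < k, ℓ < j` and `i(A̅)` over `i < k, j < ℓ`, their sum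
runs over `i < k, j ≠ ℓ`, i.e. it is `∑_{i<k} r_i r_k - ∑_j ∑_{i<k} a_{ij} a_{kj}` with `r_i` the
row sums. Every row sum is `1`, so the first term is `C(n,2)`. A column with entries in
`{0, ±1}`, sum `1` and `m` entries `-1` has sum of squares `2m + 1`, so expanding the square of
its sum shows that its products over pairs `i < k` add up to `-m`.
-/

section Pairs

variable {ι : Type*} [Fintype ι] [LinearOrder ι]

lemma sq_sum_eq_sum_sq_add_two_mul_sum_lt {R : Type*} [CommSemiring R] (x : ι → R) :
    (∑ i, x i) ^ 2 = ∑ i, x i ^ 2 + 2 * ∑ i, ∑ k, if i < k then x i * x k else 0 := by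
  have hsplit (i k : ι) : x i * x k = (if i = k then x i * x k else 0) +
      ((if i < k then x i * x k else 0) + if k < i then x k * x i else 0) := by
    rcases lt_trichotomy i k with h | rfl | h
    · simp [h, h.ne, h.not_gt]
    · simp
    · simp [h, h.ne', h.not_gt, mul_comm]
  rw [sq, sum_mul_sum, Fintype.sum_congr _ _ fun i => Fintype.sum_congr _ _ (hsplit i)]
  simp_rw [sum_add_distrib, sum_ite_eq, mem_univ, if_true, ← sq]
  rw [sum_comm (f := fun i k => if k < i then x k * x i else 0)]
  ring

lemma sum_sum_ite_lt_one_eq_choose_two :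
    ∑ i : ι, ∑ k : ι, (if i < k then (1 : ℤ) else 0) = (Fintype.card ι).choose 2 := by
  rw [← Fintype.card_product_filter_lt, card_filter, ← univ_product_univ, sum_product]
  push_cast
  rfl

end Pairs

def IsAltSignVector {n : ℕ} (f : Fin n → ℤ) : Prop :=
  AltList ((List.ofFn f).filter (fun x => x ≠ 0))

lemma sum_range_ite_mod_two (L : ℕ) :
    ∑ m ∈ range L, (if m % 2 = 0 then (1 : ℤ) else -1) = (L % 2 : ℕ) := by
  induction L with
  | zero => simp
  | succ L ih =>
    rw [sum_range_succ, ih]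
    rcases Nat.mod_two_eq_zero_or_one L with h | h <;> simp [h, Nat.add_mod]

lemma AltList.sum_eq_one {l : List ℤ} (h : AltList l) : l.sum = 1 := by
  obtain ⟨hodd, hget⟩ := h
  rw [← List.ofFn_get l, List.sum_ofFn, Fintype.sum_congr _ _ fun m : Fin l.length => hget m m.2,
    Fin.sum_univ_eq_sum_range (fun m => if m % 2 = 0 then (1 : ℤ) else -1),
    sum_range_ite_mod_two, hodd]
  rfl

lemma AltList.eq_one_or_eq_neg_one {l : List ℤ} (h : AltList l) {x : ℤ} (hx : x ∈ l) :
    x = 1 ∨ x = -1 := by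
  obtain ⟨m, rfl⟩ := List.mem_iff_get.mp hx
  rw [h.2 m m.2]
  split_ifs <;> simp

lemma List.sum_filter_ne_zero {M : Type*} [AddMonoid M] [DecidableEq M] (l : List M) :
    (l.filter (fun x => x ≠ 0)).sum = l.sum := by
  induction l with
  | nil => rfl
  | cons a t ih => by_cases h : a = 0 <;> simp_all

namespace IsAltSignVector

variable {n : ℕ} {f : Fin n → ℤ}

lemma sum_eq_one (hf : IsAltSignVector f) : ∑ x, f x = 1 := by
  have := AltList.sum_eq_one hf
  rwa [List.sum_filter_ne_zero, List.sum_ofFn] at this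

lemma apply_eq_zero_or_one_or_neg_one (hf : IsAltSignVector f) (x : Fin n) :
    f x = 0 ∨ f x = 1 ∨ f x = -1 := by
  by_cases h : f x = 0
  · exact Or.inl h
  · exact Or.inr <| AltList.eq_one_or_eq_neg_one hf <| List.mem_filter.mpr
      ⟨List.mem_ofFn.mpr ⟨x, rfl⟩, by simp [h]⟩

lemma sum_sq (hf : IsAltSignVector f) : ∑ x, f x ^ 2 = 2 * (#{x | f x = -1} : ℤ) + 1 := by
  have h (x) : f x ^ 2 = f x + 2 * if f x = -1 then 1 else 0 := by
    rcases hf.apply_eq_zero_or_one_or_neg_one x with h | h | h <;> simp [h]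
  simp_rw [h, sum_add_distrib, ← mul_sum, hf.sum_eq_one, sum_boole]
  rw [add_comm]

lemma sum_sum_ite_lt_mul (hf : IsAltSignVector f) :
    ∑ i, ∑ k, (if i < k then f i * f k else 0) = -#{i | f i = -1} := by
  have := sq_sum_eq_sum_sq_add_two_mul_sum_lt f
  rw [hf.sum_eq_one, hf.sum_sq] at this
  linarith

end IsAltSignVector

lemma invNum_reflect {n : ℕ} (A : Matrix (Fin n) (Fin n) ℤ) :
    invNum (reflect A) =
      ∑ i, ∑ j, ∑ k, ∑ l, if i < k ∧ j < l then A i j * A k l else 0 := by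
  unfold invNum reflect
  refine sum_congr rfl fun i _ => ?_
  rw [← Equiv.sum_comp Fin.revPerm]
  refine sum_congr rfl fun j _ => sum_congr rfl fun k _ => ?_
  rw [← Equiv.sum_comp Fin.revPerm]
  simp [Fin.rev_lt_rev]

lemma invNum_add_invNum_reflect {n : ℕ} (A : Matrix (Fin n) (Fin n) ℤ) :
    invNum A + invNum (reflect A) =
      ∑ i, ∑ k, (if i < k then (∑ j, A i j) * (∑ l, A k l) else 0) -
        ∑ j, ∑ i, ∑ k, if i < k then A i j * A k j else 0 := by
  have hsplit (i j k l : Fin n) :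
      ((if i < k ∧ l < j then A i j * A k l else 0) +
        if i < k ∧ j < l then A i j * A k l else 0) =
      (if i < k then A i j * A k l else 0) - if i < k ∧ j = l then A i j * A k l else 0 := by
    by_cases hik : i < k
    · rcases lt_trichotomy j l with h | rfl | h
      · simp [hik, h, h.ne, h.not_gt]
      · simp [hik]
      · simp [hik, h, h.ne', h.not_gt]
    · simp [hik]
  rw [invNum_reflect, invNum]
  simp_rw [← sum_add_distrib, hsplit, sum_sub_distrib, and_comm (b := _ = _), ite_and, sum_ite_eq,
    mem_univ, if_true]
  congr 1
  · refine sum_congr rfl fun i _ => ?_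
    rw [sum_comm]
    simp_rw [sum_mul_sum, ite_sum_zero]
  · exact sum_comm

lemma sMinus_eq_sum_card_col {n : ℕ} (A : Matrix (Fin n) (Fin n) ℤ) :
    (sMinus A : ℤ) = ∑ j, (#{i | A i j = -1} : ℤ) := by
  rw [sMinus, card_filter, sum_product, sum_comm]
  push_cast [card_filter]
  rfl

/-- `i(A) + i(A̅) = C(n,2) + s(A)`. -/
theorem stmt_6 {n : ℕ} (A : Matrix (Fin n) (Fin n) ℤ) (hA : IsASM A) :
    invNum A + invNum (reflect A) = (n.choose 2 : ℤ) + (sMinus A : ℤ) := by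
  have hrow (i : Fin n) : IsAltSignVector (A i) := hA.1 i
  have hcol (j : Fin n) : IsAltSignVector (fun i => A i j) := hA.2 j
  simp_rw [invNum_add_invNum_reflect, (hrow _).sum_eq_one, mul_one, sum_sum_ite_lt_one_eq_choose_two,
    Fintype.card_fin, (hcol _).sum_sum_ite_lt_mul, sMinus_eq_sum_card_col, sum_neg_distrib, sub_neg_eq_add]
end

section
/- Horizontal displacement H is injective on the set of (0,1)-matrices whose first column is nonzero and whose last column is zero. -/
open Finset

open scoped Classical in
/-- Horizontal displacement `H`: if the nonzero columns of `P` are `j_1 < ⋯ < j_k` with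
`j_1 = 0` (first column) and `j_k < n` (last column zero), then column `j_i` is moved to
column `j_{i+1}` (with `j_{k+1} = n`, the last column) and column `0` becomes zero.
Equivalently, a column `j` of `H(P)` equals the nearest nonzero column of `P` strictly to
its left, provided `j` is a nonzero column of `P` or the last column; all other columns of
`H(P)` are zero. -/
noncomputable def Hdisp {m n : ℕ} (P : Matrix (Fin m) (Fin (n + 1)) ℤ) :
    Matrix (Fin m) (Fin (n + 1)) ℤ :=
  fun i j =>
    if (∃ i', P i' j ≠ 0) ∨ j = Fin.last n then
      match (univ.filter (fun j' : Fin (n + 1) => j' < j ∧ ∃ i', P i' j' ≠ 0)).max with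
      | some j' => P i j'
      | none => 0
    else 0

open scoped Classical

lemma Hdisp_eq_max' {m n : ℕ} (P : Matrix (Fin m) (Fin (n + 1)) ℤ) (i : Fin m)
    (j : Fin (n + 1)) (hj : (∃ i', P i' j ≠ 0) ∨ j = Fin.last n)
    (hne : (univ.filter (fun j' : Fin (n + 1) => j' < j ∧ ∃ i', P i' j' ≠ 0)).Nonempty) :
    Hdisp P i j
      = P i ((univ.filter (fun j' : Fin (n + 1) => j' < j ∧ ∃ i', P i' j' ≠ 0)).max' hne) := by
  simp only [Hdisp, if_pos hj, ← Finset.coe_max' hne]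

lemma Hdisp_zero_of_not {m n : ℕ} (P : Matrix (Fin m) (Fin (n + 1)) ℤ) (i : Fin m)
    (j : Fin (n + 1)) (hj : ¬((∃ i', P i' j ≠ 0) ∨ j = Fin.last n)) :
    Hdisp P i j = 0 := by
  simp only [Hdisp, if_neg hj]

lemma Hdisp_at_zero {m n : ℕ} (P : Matrix (Fin m) (Fin (n + 1)) ℤ) (i : Fin m) :
    Hdisp P i 0 = 0 := by
  have hemp : (univ.filter (fun j' : Fin (n + 1) => j' < 0 ∧ ∃ i', P i' j' ≠ 0)) = ∅ := by
    apply Finset.filter_false_of_mem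
    intro j' _ hj'
    exact absurd hj'.1 (Fin.not_lt_zero j')
  unfold Hdisp
  split_ifs with hc
  · rw [hemp, Finset.max_empty]
  · rfl

lemma NZ_Hdisp_iff {m n : ℕ} (P : Matrix (Fin m) (Fin (n + 1)) ℤ)
    (hP0 : ∃ i, P i 0 ≠ 0) (j : Fin (n + 1)) :
    (∃ i, Hdisp P i j ≠ 0) ↔ ((∃ i', P i' j ≠ 0) ∨ j = Fin.last n) ∧ j ≠ 0 := by
  constructor
  · rintro ⟨i, hi⟩
    by_cases hc : (∃ i', P i' j ≠ 0) ∨ j = Fin.last n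
    · refine ⟨hc, ?_⟩
      rintro rfl
      exact hi (Hdisp_at_zero P i)
    · exact absurd (Hdisp_zero_of_not P i j hc) hi
  · rintro ⟨hc, hj0⟩
    have hne : (univ.filter (fun j' : Fin (n + 1) => j' < j ∧ ∃ i', P i' j' ≠ 0)).Nonempty :=
      ⟨0, Finset.mem_filter.2 ⟨Finset.mem_univ _, Fin.pos_of_ne_zero hj0, hP0⟩⟩
    obtain ⟨-, -, i, hi⟩ := Finset.mem_filter.1 (Finset.max'_mem _ hne)
    exact ⟨i, by rw [Hdisp_eq_max' P i j hc hne]; exact hi⟩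

lemma Hdisp_key {m n : ℕ} (P : Matrix (Fin m) (Fin (n + 1)) ℤ) (i : Fin m)
    (j t : Fin (n + 1)) (hpj : ∃ i', P i' j ≠ 0)
    (hjt : j < t) (htc : (∃ i', P i' t ≠ 0) ∨ t = Fin.last n)
    (hmin : ∀ j', j < j' → j' < t → ¬∃ i', P i' j' ≠ 0) :
    Hdisp P i t = P i j := by
  have hne : (univ.filter (fun j' : Fin (n + 1) => j' < t ∧ ∃ i', P i' j' ≠ 0)).Nonempty :=
    ⟨j, Finset.mem_filter.2 ⟨Finset.mem_univ _, hjt, hpj⟩⟩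
  rw [Hdisp_eq_max' P i t htc hne]
  congr 1
  have hm := (Finset.mem_filter.1 (Finset.max'_mem _ hne)).2
  apply le_antisymm
  · by_contra h'
    push_neg at h'
    exact hmin _ h' hm.1 hm.2
  · exact Finset.le_max' _ j (Finset.mem_filter.2 ⟨Finset.mem_univ _, hjt, hpj⟩)

/-- Horizontal displacement is injective on `(0,1)`-matrices whose first column is
nonzero and whose last column is zero. -/
theorem stmt_15 {m n : ℕ} (P Q : Matrix (Fin m) (Fin (n + 1)) ℤ)
    (hP01 : ∀ i j, P i j = 0 ∨ P i j = 1) (hQ01 : ∀ i j, Q i j = 0 ∨ Q i j = 1)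
    (hPfirst : ∃ i, P i 0 ≠ 0) (hQfirst : ∃ i, Q i 0 ≠ 0)
    (hPlast : ∀ i, P i (Fin.last n) = 0) (hQlast : ∀ i, Q i (Fin.last n) = 0)
    (h : Hdisp P = Hdisp Q) : P = Q := by
  have hSP : ∀ j, (∃ i, P i j ≠ 0) ↔ (∃ i, Q i j ≠ 0) := by
    intro j
    by_cases hj0 : j = 0
    · subst hj0
      exact ⟨fun _ => hQfirst, fun _ => hPfirst⟩
    by_cases hjl : j = Fin.last n
    · subst hjl
      constructor <;> rintro ⟨i, hi⟩
      · exact absurd (hPlast i) hi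
      · exact absurd (hQlast i) hi
    · constructor
      · intro hp
        have h1 : ∃ i, Hdisp P i j ≠ 0 :=
          (NZ_Hdisp_iff P hPfirst j).2 ⟨Or.inl hp, hj0⟩
        rw [h] at h1
        rcases ((NZ_Hdisp_iff Q hQfirst j).1 h1).1 with hq | hl
        · exact hq
        · exact absurd hl hjl
      · intro hq
        have h1 : ∃ i, Hdisp Q i j ≠ 0 :=
          (NZ_Hdisp_iff Q hQfirst j).2 ⟨Or.inl hq, hj0⟩
        rw [← h] at h1
        rcases ((NZ_Hdisp_iff P hPfirst j).1 h1).1 with hp | hl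
        · exact hp
        · exact absurd hl hjl
  funext i j
  by_cases hpj : ∃ i', P i' j ≠ 0
  · have hqj : ∃ i', Q i' j ≠ 0 := (hSP j).1 hpj
    have hjl : j ≠ Fin.last n := by
      rintro rfl
      obtain ⟨i', hi'⟩ := hpj
      exact hi' (hPlast i')
    set T := univ.filter
      (fun j' : Fin (n + 1) => j < j' ∧ ((∃ i', P i' j' ≠ 0) ∨ j' = Fin.last n)) with hT
    have hTne : T.Nonempty :=
      ⟨Fin.last n, Finset.mem_filter.2 ⟨Finset.mem_univ _,
        lt_of_le_of_ne (Fin.le_last j) hjl, Or.inr rfl⟩⟩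
    obtain ⟨-, hjt, htc⟩ := Finset.mem_filter.1 (T.min'_mem hTne)
    have hmin : ∀ j', j < j' → j' < T.min' hTne → ¬∃ i', P i' j' ≠ 0 := by
      intro j' h1 h2 h3
      have : T.min' hTne ≤ j' :=
        Finset.min'_le _ _ (Finset.mem_filter.2 ⟨Finset.mem_univ _, h1, Or.inl h3⟩)
      exact absurd h2 (not_lt.2 this)
    have htcQ : (∃ i', Q i' (T.min' hTne) ≠ 0) ∨ T.min' hTne = Fin.last n := by
      rcases htc with h1 | h1
      · exact Or.inl ((hSP _).1 h1)
      · exact Or.inr h1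
    have hminQ : ∀ j', j < j' → j' < T.min' hTne → ¬∃ i', Q i' j' ≠ 0 := by
      intro j' h1 h2 h3
      exact hmin j' h1 h2 ((hSP j').2 h3)
    calc P i j = Hdisp P i (T.min' hTne) := (Hdisp_key P i j _ hpj hjt htc hmin).symm
      _ = Hdisp Q i (T.min' hTne) := by rw [h]
      _ = Q i j := Hdisp_key Q i j _ hqj hjt htcQ hminQ
  · have hqj : ¬∃ i', Q i' j ≠ 0 := fun hq => hpj ((hSP j).2 hq)
    push_neg at hpj hqj
    rw [hpj i, hqj i]
end
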